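/- arXiv:2005.10998 — 2 statements merged into one kernel-verified Lean document; each statement's English description precedes it below -/
import Mathlib

section
/- For a fixed true propensity score p ∈ (0,1) and α > 0, the expected NAWT pseudo-log-likelihood ℓ(q) = p·q^α/α − (1−p)·∫₀^q u^α/(1−u) du, as a function of the estimated propensity score q ∈ (0,1), has derivative ℓ'(q) = q^(α−1)·(p − q)/(1 − q) and is uniquely maximized at q = p. -/
/-! On `(0, 1)` the derivative `q ^ (α - 1) * (p - q) / (1 - q)` has the sign of `p - q`, so the
likelihood strictly increases up to `p` and strictly decreases after it. -/

open Set

theorem lt_of_hasDerivAt_pos_of_neg {f f' : ℝ → ℝ} {a b c x : ℝ} (hc : c ∈ Ioo a b)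
    (hf : ∀ y ∈ Ioo a b, HasDerivAt f (f' y) y) (hpos : ∀ y ∈ Ioo a c, 0 < f' y)
    (hneg : ∀ y ∈ Ioo c b, f' y < 0) (hx : x ∈ Ioo a b) (hxc : x ≠ c) : f x < f c := by
  have hcont : ContinuousOn f (Ioo a b) := fun y hy => (hf y hy).continuousAt.continuousWithinAt
  rcases hxc.lt_or_gt with hlt | hgt
  · have hmono : StrictMonoOn f (Icc x c) := by
      refine strictMonoOn_of_hasDerivWithinAt_pos (f' := f') (convex_Icc x c)
        (hcont.mono (Icc_subset_Ioo hx.1 hc.2)) (fun y hy => ?_) (fun y hy => ?_)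
      all_goals rw [interior_Icc] at hy
      · exact (hf y ⟨hx.1.trans hy.1, hy.2.trans hc.2⟩).hasDerivWithinAt
      · exact hpos y ⟨hx.1.trans hy.1, hy.2⟩
    exact hmono (left_mem_Icc.2 hlt.le) (right_mem_Icc.2 hlt.le) hlt
  · have hanti : StrictAntiOn f (Icc c x) := by
      refine strictAntiOn_of_hasDerivWithinAt_neg (f' := f') (convex_Icc c x)
        (hcont.mono (Icc_subset_Ioo hc.1 hx.2)) (fun y hy => ?_) (fun y hy => ?_)
      all_goals rw [interior_Icc] at hy
      · exact (hf y ⟨hc.1.trans hy.1, hy.2.trans hx.2⟩).hasDerivWithinAt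
      · exact hneg y ⟨hy.1, hy.2.trans hx.2⟩
    exact hanti (left_mem_Icc.2 hgt.le) (right_mem_Icc.2 hgt.le) hgt

theorem continuousOn_rpow_div_one_sub {α : ℝ} (hα : 0 ≤ α) :
    ContinuousOn (fun u : ℝ => u ^ α / (1 - u)) (Iio 1) := fun _ hu =>
  ((Real.continuousAt_rpow_const _ α (Or.inr hα)).div (continuousAt_const.sub continuousAt_id)
    (sub_ne_zero.2 (ne_of_gt hu))).continuousWithinAt

theorem hasDerivAt_integral_rpow_div_one_sub {α q : ℝ} (hα : 0 ≤ α) (hq : q < 1) :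
    HasDerivAt (fun r => ∫ u in (0 : ℝ)..r, u ^ α / (1 - u)) (q ^ α / (1 - q)) q := by
  have hcont := continuousOn_rpow_div_one_sub hα
  refine intervalIntegral.integral_hasDerivAt_right ?_
    (hcont.stronglyMeasurableAtFilter isOpen_Iio q hq) (hcont.continuousAt (Iio_mem_nhds hq))
  refine (hcont.mono fun u hu => ?_).intervalIntegrable
  rw [mem_uIcc] at hu
  rcases hu with ⟨-, hu⟩ | ⟨-, hu⟩ <;> [exact hu.trans_lt hq; exact hu.trans_lt one_pos]

noncomputable def nawtLogLikelihood (p α q : ℝ) : ℝ :=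
  p * q ^ α / α - (1 - p) * ∫ u in (0 : ℝ)..q, u ^ α / (1 - u)

theorem hasDerivAt_nawtLogLikelihood {p α q : ℝ} (hα : 0 < α) (hq : q ∈ Ioo (0 : ℝ) 1) :
    HasDerivAt (nawtLogLikelihood p α) (q ^ (α - 1) * (p - q) / (1 - q)) q := by
  have hpow : HasDerivAt (fun r : ℝ => p * r ^ α / α) (p * q ^ (α - 1)) q := by
    refine (((Real.hasDerivAt_rpow_const (Or.inl hq.1.ne')).const_mul p).div_const α).congr_deriv
      ?_
    field_simp
  have hint := (hasDerivAt_integral_rpow_div_one_sub hα.le hq.2).const_mul (1 - p)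
  refine (hpow.sub hint).congr_deriv ?_
  have hq0 : q ≠ 0 := hq.1.ne'
  have h1q : 1 - q ≠ 0 := sub_ne_zero.2 hq.2.ne'
  rw [Real.rpow_sub_one hq0]
  field_simp
  ring

theorem rpow_sub_one_mul_sub_div_one_sub_pos {p α q : ℝ} (hq : q ∈ Ioo 0 p) (hp : p < 1) :
    0 < q ^ (α - 1) * (p - q) / (1 - q) := by
  have := Real.rpow_pos_of_pos hq.1 (α - 1)
  have := sub_pos.2 hq.2
  have := sub_pos.2 (hq.2.trans hp)
  positivity

theorem rpow_sub_one_mul_sub_div_one_sub_neg {p α q : ℝ} (hq : q ∈ Ioo p 1) (hp : 0 < p) :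
    q ^ (α - 1) * (p - q) / (1 - q) < 0 :=
  div_neg_of_neg_of_pos
    (mul_neg_of_pos_of_neg (Real.rpow_pos_of_pos (hp.trans hq.1) _) (sub_neg.2 hq.1))
    (sub_pos.2 hq.2)

/-- The expected NAWT pseudo-log-likelihood ℓ(q) = p·q^α/α − (1−p)·∫₀^q u^α/(1−u) du
has derivative q^(α−1)·(p − q)/(1 − q) on (0,1) and is uniquely maximized at q = p. -/
theorem stmt_11 (p α : ℝ) (hp0 : 0 < p) (hp1 : p < 1) (hα : 0 < α) :
    (∀ q ∈ Set.Ioo (0 : ℝ) 1,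
        HasDerivAt (fun q : ℝ => p * q ^ α / α - (1 - p) * ∫ u in (0 : ℝ)..q, u ^ α / (1 - u))
          (q ^ (α - 1) * (p - q) / (1 - q)) q) ∧
      (∀ q ∈ Set.Ioo (0 : ℝ) 1, q ≠ p →
        p * q ^ α / α - (1 - p) * ∫ u in (0 : ℝ)..q, u ^ α / (1 - u)
          < p * p ^ α / α - (1 - p) * ∫ u in (0 : ℝ)..p, u ^ α / (1 - u)) := by
  have hderiv (q : ℝ) (hq : q ∈ Ioo (0 : ℝ) 1) :=
    hasDerivAt_nawtLogLikelihood (p := p) hα hq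
  exact ⟨hderiv, fun q hq hqp => lt_of_hasDerivAt_pos_of_neg ⟨hp0, hp1⟩ hderiv
    (fun _ hy => rpow_sub_one_mul_sub_div_one_sub_pos hy hp1)
    (fun _ hy => rpow_sub_one_mul_sub_div_one_sub_neg hy hp0) hq hqp⟩
end

section
/- If T ⫫ (Y(0), Y(1)) conditional on X, π(X) = P(T = 1 | X) satisfies 0 < π(X) < 1 almost surely, and all relevant expectations are finite, then E[(1−T)·π(X)·Y(0)/(1−π(X))] = E[π(X)·Y(0)] = E[T·Y(0)], so that E[(1−T)·π(X)·Y/(1−π(X))] / P(T=1) = E[Y(0) | T = 1] where Y = T·Y(1) + (1−T)·Y(0). -/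
/-! Conditional ignorability makes `T` and `Y(0)` independent under the regular conditional
distribution given `σ(X)`, hence `E[T·Y(0) | X] = π·E[Y(0) | X]`. Each of the three expectations
then reduces to `E[π·E[Y(0) | X]]`: `E[T·Y(0)]` by the tower property, `E[π·Y(0)]` by pulling out
the `σ(X)`-measurable `π`, and the weighted one by pulling out `π/(1−π)` and using
`E[(1−T)·Y(0) | X] = (1−π)·E[Y(0) | X]`. Finally `(1−T)·Y = (1−T)·Y(0)` for the observed outcome,
and `E[T·Y(0)]` is the integral of `Y(0)` over `{T = 1}`. -/

open MeasureTheory ProbabilityTheory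

section

variable {Ω : Type*} {m mΩ : MeasurableSpace Ω} {μ : Measure Ω}

theorem ProbabilityTheory.CondIndepFun.condExp_mul [StandardBorelSpace Ω] [IsFiniteMeasure μ]
    {hm : m ≤ mΩ} {f g : Ω → ℝ} (hfg : CondIndepFun m hm f g μ) (hf : Measurable f)
    (hg : Measurable g) (hfi : Integrable f μ) (hgi : Integrable g μ)
    (hfgi : Integrable (f * g) μ) :
    μ[f * g | m] =ᵐ[μ] μ[f | m] * μ[g | m] := by
  have hindep : ∀ᵐ ω ∂μ, IndepFun f g (condExpKernel μ m ω) := by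
    refine ae_of_ae_trim hm ?_
    filter_upwards [(condIndepFun_iff_map_prod_eq_prod_map_map hf hg).1 hfg] with ω hω
    rw [indepFun_iff_map_prod_eq_prod_map_map hf.aemeasurable hg.aemeasurable]
    simpa only [Kernel.map_apply _ (hf.prodMk hg), Kernel.prod_apply, Kernel.map_apply _ hf,
      Kernel.map_apply _ hg] using hω
  filter_upwards [condExp_ae_eq_integral_condExpKernel hm hfgi,
    condExp_ae_eq_integral_condExpKernel hm hfi, condExp_ae_eq_integral_condExpKernel hm hgi,
    hindep] with ω hfg_eq hf_eq hg_eq hω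
  rw [hfg_eq, Pi.mul_apply, hf_eq, hg_eq]
  exact hω.integral_mul_eq_mul_integral hf.aestronglyMeasurable hg.aestronglyMeasurable

theorem MeasureTheory.integral_mul_condExp_of_stronglyMeasurable (hm : m ≤ mΩ)
    [SigmaFinite (μ.trim hm)] {f g : Ω → ℝ} (hf : StronglyMeasurable[m] f)
    (hfg : Integrable (f * g) μ) (hg : Integrable g μ) :
    ∫ ω, f ω * μ[g | m] ω ∂μ = ∫ ω, f ω * g ω ∂μ :=
  (integral_congr_ae (condExp_mul_of_stronglyMeasurable_left hf hfg hg).symm).trans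
    (integral_condExp hm)

theorem MeasureTheory.Integrable.mul_of_zero_or_one {T Y : Ω → ℝ} (hY : Integrable Y μ)
    (hT : Measurable T) (hT01 : ∀ ω, T ω = 0 ∨ T ω = 1) : Integrable (T * Y) μ :=
  hY.bdd_mul (c := 1) hT.aestronglyMeasurable
    (ae_of_all _ fun ω => by rcases hT01 ω with h | h <;> simp [h])

theorem MeasureTheory.integral_mul_eq_setIntegral_of_zero_or_one {T Y : Ω → ℝ} (hT : Measurable T)
    (hT01 : ∀ ω, T ω = 0 ∨ T ω = 1) :
    ∫ ω, T ω * Y ω ∂μ = ∫ ω in {ω | T ω = 1}, Y ω ∂μ := by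
  have hA : MeasurableSet {ω | T ω = 1} := hT (measurableSet_singleton 1)
  rw [← integral_indicator hA]
  congr 1 with ω
  rcases hT01 ω with h | h <;> simp [h, Set.indicator]

namespace ProbabilityTheory

variable {T Y π : Ω → ℝ}

theorem integral_mul_eq_integral_condExp_mul_condExp (hm : m ≤ mΩ) [SigmaFinite (μ.trim hm)]
    (hTY : μ[T * Y | m] =ᵐ[μ] μ[T | m] * μ[Y | m]) :
    ∫ ω, T ω * Y ω ∂μ = ∫ ω, μ[T | m] ω * μ[Y | m] ω ∂μ :=
  (integral_condExp hm).symm.trans (integral_congr_ae hTY)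

theorem integral_mul_eq_integral_condExp_mul_condExp_of_ae_eq (hm : m ≤ mΩ)
    [SigmaFinite (μ.trim hm)] (hY : Integrable Y μ)
    (hπ : π =ᵐ[μ] μ[T | m]) (hπY : Integrable (fun ω => π ω * Y ω) μ) :
    ∫ ω, π ω * Y ω ∂μ = ∫ ω, μ[T | m] ω * μ[Y | m] ω ∂μ := by
  have hrw : (fun ω => π ω * Y ω) =ᵐ[μ] fun ω => μ[T | m] ω * Y ω := by
    filter_upwards [hπ] with ω h
    rw [h]
  rw [integral_congr_ae hrw, integral_mul_condExp_of_stronglyMeasurable hm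
    stronglyMeasurable_condExp (hπY.congr hrw) hY]

theorem condExp_one_sub_mul (hTY : μ[T * Y | m] =ᵐ[μ] μ[T | m] * μ[Y | m])
    (hY : Integrable Y μ) (hTYi : Integrable (T * Y) μ) :
    μ[(1 - T) * Y | m] =ᵐ[μ] (1 - μ[T | m]) * μ[Y | m] := by
  rw [sub_mul, one_mul]
  filter_upwards [condExp_sub hY hTYi m, hTY] with ω hsub hmul
  simp only [hsub, hmul, Pi.sub_apply, Pi.mul_apply, Pi.one_apply]
  ring

theorem integral_ipw_eq_integral_condExp_mul_condExp (hm : m ≤ mΩ) [SigmaFinite (μ.trim hm)]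
    (hTY : μ[T * Y | m] =ᵐ[μ] μ[T | m] * μ[Y | m]) (hY : Integrable Y μ)
    (hTYi : Integrable (T * Y) μ) (hπ : π =ᵐ[μ] μ[T | m]) (hπ1 : ∀ᵐ ω ∂μ, π ω < 1)
    (hipw : Integrable (fun ω => (1 - T ω) * π ω * Y ω / (1 - π ω)) μ) :
    ∫ ω, (1 - T ω) * π ω * Y ω / (1 - π ω) ∂μ = ∫ ω, μ[T | m] ω * μ[Y | m] ω ∂μ := by
  set W : Ω → ℝ := fun ω => μ[T | m] ω / (1 - μ[T | m] ω)
  have hW : StronglyMeasurable[m] W :=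
    (stronglyMeasurable_condExp.measurable.div
      (measurable_const.sub stronglyMeasurable_condExp.measurable)).stronglyMeasurable
  have hrw : (fun ω => (1 - T ω) * π ω * Y ω / (1 - π ω)) =ᵐ[μ]
      fun ω => W ω * ((1 - T) * Y) ω := by
    filter_upwards [hπ] with ω h
    simp only [W, h, Pi.mul_apply, Pi.sub_apply, Pi.one_apply]
    ring
  have h1TYi : Integrable ((1 - T) * Y) μ := by
    rw [sub_mul, one_mul]
    exact hY.sub hTYi
  calc ∫ ω, (1 - T ω) * π ω * Y ω / (1 - π ω) ∂μ
      = ∫ ω, W ω * ((1 - T) * Y) ω ∂μ := integral_congr_ae hrw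
    _ = ∫ ω, W ω * μ[(1 - T) * Y | m] ω ∂μ :=
      (integral_mul_condExp_of_stronglyMeasurable hm hW (hipw.congr hrw) h1TYi).symm
    _ = ∫ ω, μ[T | m] ω * μ[Y | m] ω ∂μ := by
      refine integral_congr_ae ?_
      filter_upwards [condExp_one_sub_mul hTY hY hTYi, hπ, hπ1] with ω h hπω hω
      have hZ1 : 1 - μ[T | m] ω ≠ 0 := by rw [← hπω]; linarith
      simp only [W, h, Pi.mul_apply, Pi.sub_apply, Pi.one_apply]
      field_simp

end ProbabilityTheory

end

theorem stmt_13_general {Ω 𝓧 : Type*} {mΩ : MeasurableSpace Ω} [StandardBorelSpace Ω]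
    [MeasurableSpace 𝓧]
    (μ : Measure Ω) [IsProbabilityMeasure μ]
    (X : Ω → 𝓧) (hX : Measurable X)
    (T : Ω → ℝ) (hT : Measurable T) (hT01 : ∀ ω, T ω = 0 ∨ T ω = 1)
    (Y0 Y1 : Ω → ℝ) (hY0 : Measurable Y0)
    -- conditional ignorability: T ⫫ (Y(0), Y(1)) given X
    (hindep : CondIndepFun (MeasurableSpace.comap X inferInstance)
        (hX.comap_le) T (fun ω => (Y0 ω, Y1 ω)) μ)
    -- π = P(T = 1 | X) as the conditional expectation of T given σ(X)
    (π : Ω → ℝ) (hπ : π =ᵐ[μ] μ[T | MeasurableSpace.comap X inferInstance])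
    -- positivity
    (hpos : ∀ᵐ ω ∂μ, 0 < π ω ∧ π ω < 1)
    -- all relevant expectations are finite
    (hY0int : Integrable Y0 μ)
    (hint0 : Integrable (fun ω => (1 - T ω) * π ω * Y0 ω / (1 - π ω)) μ)
    (hintπ : Integrable (fun ω => π ω * Y0 ω) μ) :
    (∫ ω, (1 - T ω) * π ω * Y0 ω / (1 - π ω) ∂μ = ∫ ω, π ω * Y0 ω ∂μ) ∧
      (∫ ω, π ω * Y0 ω ∂μ = ∫ ω, T ω * Y0 ω ∂μ) ∧
      ((∫ ω, (1 - T ω) * π ω * (T ω * Y1 ω + (1 - T ω) * Y0 ω) / (1 - π ω) ∂μ)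
          / (μ {ω | T ω = 1}).toReal
        = (∫ ω in {ω | T ω = 1}, Y0 ω ∂μ) / (μ {ω | T ω = 1}).toReal) := by
  have hTY0i : Integrable (T * Y0) μ := hY0int.mul_of_zero_or_one hT hT01
  have hTint : Integrable T μ := .of_bound hT.aestronglyMeasurable 1
    (ae_of_all _ fun ω => by rcases hT01 ω with h | h <;> simp [h])
  have hmean : μ[T * Y0 | MeasurableSpace.comap X inferInstance] =ᵐ[μ]
      μ[T | MeasurableSpace.comap X inferInstance] *
        μ[Y0 | MeasurableSpace.comap X inferInstance] :=
    (hindep.comp measurable_id measurable_fst).condExp_mul hT hY0 hTint hY0int hTY0i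
  have hipw := integral_ipw_eq_integral_condExp_mul_condExp hX.comap_le hmean hY0int hTY0i hπ
    (hpos.mono fun _ h => h.2) hint0
  have hπY0 := integral_mul_eq_integral_condExp_mul_condExp_of_ae_eq hX.comap_le hY0int hπ hintπ
  have hTY0 := integral_mul_eq_integral_condExp_mul_condExp hX.comap_le hmean
  have hobserved : (fun ω => (1 - T ω) * π ω * (T ω * Y1 ω + (1 - T ω) * Y0 ω) / (1 - π ω)) =
      fun ω => (1 - T ω) * π ω * Y0 ω / (1 - π ω) :=
    funext fun ω => by rcases hT01 ω with h | h <;> simp [h]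
  refine ⟨hipw.trans hπY0.symm, hπY0.trans hTY0.symm, ?_⟩
  rw [hobserved, hipw, ← hTY0, integral_mul_eq_setIntegral_of_zero_or_one hT hT01]

/-- Under conditional ignorability of treatment (T ⫫ (Y(0),Y(1)) | X) and positivity,
E[(1−T)·π(X)·Y(0)/(1−π(X))] = E[π(X)·Y(0)] = E[T·Y(0)], so that the weighted mean of
the observed outcomes of control units identifies E[Y(0) | T = 1]. -/
theorem stmt_13 {Ω 𝓧 : Type*} {mΩ : MeasurableSpace Ω} [StandardBorelSpace Ω]
    [MeasurableSpace 𝓧]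
    (μ : Measure Ω) [IsProbabilityMeasure μ]
    (X : Ω → 𝓧) (hX : Measurable X)
    (T : Ω → ℝ) (hT : Measurable T) (hT01 : ∀ ω, T ω = 0 ∨ T ω = 1)
    (Y0 Y1 : Ω → ℝ) (hY0 : Measurable Y0) (hY1 : Measurable Y1)
    -- conditional ignorability: T ⫫ (Y(0), Y(1)) given X
    (hindep : CondIndepFun (MeasurableSpace.comap X inferInstance)
        (hX.comap_le) T (fun ω => (Y0 ω, Y1 ω)) μ)
    -- π = P(T = 1 | X) as the conditional expectation of T given σ(X)
    (π : Ω → ℝ) (hπ : π =ᵐ[μ] μ[T | MeasurableSpace.comap X inferInstance])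
    -- positivity
    (hpos : ∀ᵐ ω ∂μ, 0 < π ω ∧ π ω < 1)
    (hT1pos : 0 < μ {ω | T ω = 1})
    -- all relevant expectations are finite
    (hY0int : Integrable Y0 μ) (hY1int : Integrable Y1 μ)
    (hint0 : Integrable (fun ω => (1 - T ω) * π ω * Y0 ω / (1 - π ω)) μ)
    (hint : Integrable
      (fun ω => (1 - T ω) * π ω * (T ω * Y1 ω + (1 - T ω) * Y0 ω) / (1 - π ω)) μ)
    (hintπ : Integrable (fun ω => π ω * Y0 ω) μ) :
    (∫ ω, (1 - T ω) * π ω * Y0 ω / (1 - π ω) ∂μ = ∫ ω, π ω * Y0 ω ∂μ) ∧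
      (∫ ω, π ω * Y0 ω ∂μ = ∫ ω, T ω * Y0 ω ∂μ) ∧
      ((∫ ω, (1 - T ω) * π ω * (T ω * Y1 ω + (1 - T ω) * Y0 ω) / (1 - π ω) ∂μ)
          / (μ {ω | T ω = 1}).toReal
        = (∫ ω in {ω | T ω = 1}, Y0 ω ∂μ) / (μ {ω | T ω = 1}).toReal) :=
  stmt_13_general (mΩ := mΩ) μ X hX T hT hT01 Y0 Y1 hY0 hindep π hπ hpos hY0int hint0 hintπ
end
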